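/- arXiv:2509.11339 — 4 statements merged into one kernel-verified Lean document; each statement's English description precedes it below -/
import Mathlib

section
/- (Boas) For every complex sequence (s_n)_{n∈ℕ} there exists a finite complex measure μ on ℝ with support contained in [0,∞) such that s_n = ∫ xⁿ dμ(x) for all n ∈ ℕ, and all absolute moments ∫ |x|ⁿ d|μ|(x) are finite. -/
/-!
The measure is atomic. Level `k` has the atoms `t_k, 2 t_k, …, (k + 1) t_k` with complex weights
`d_k w_{k,i} / t_k ^ k`, where `w_k` is the last row of the inverse Vandermonde matrix of the nodes
`1, …, k + 1`; hence level `k` has moments `0` in orders `< k` and `d_k` in order `k`. Choosing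
`d_k` recursively to correct the `k`-th moment of the earlier levels makes the moments of all
levels sum to `s n`, a finite sum for each `n`. The scale `t_k` is taken so large that the levels
lie in disjoint intervals, making the atoms distinct, and that the absolute `n`-th moment of level
`k` is at most `2⁻ᵏ` once `k > 2 n`, so all absolute moments are finite. The complex measure
`∑ c_p δ_{x_p}` is then `h • ρ` with `ρ = ∑ |c_p| δ_{x_p}` and `h (x_p) = c_p / |c_p|`.
-/

open MeasureTheory Function
open scoped ENNReal

noncomputable section

namespace Boas

section AtomicMeasure

variable {ι : Type*} (x : ι → ℝ) (c : ι → ℂ)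

def atomicMeasure : Measure ℝ :=
  Measure.sum fun i => ‖c i‖ₑ • Measure.dirac (x i)

def atomicDensity : ℝ → ℂ :=
  extend x (fun i => c i / ‖c i‖) 0

lemma lintegral_atomicMeasure (f : ℝ → ℝ≥0∞) :
    ∫⁻ y, f y ∂atomicMeasure x c = ∑' i, ‖c i‖ₑ * f (x i) := by
  simp only [atomicMeasure, lintegral_sum_measure, lintegral_smul_measure, lintegral_dirac,
    smul_eq_mul]

lemma atomicMeasure_eq_zero_of_forall_notMem {t : Set ℝ} (ht : MeasurableSet t)
    (hx : ∀ i, x i ∉ t) :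
    atomicMeasure x c t = 0 := by
  simp [atomicMeasure, Measure.sum_apply _ ht, Measure.dirac_apply' _ ht, hx]

lemma integrable_atomicMeasure {E : Type*} [NormedAddCommGroup E] {f : ℝ → E}
    (hf : AEStronglyMeasurable f (atomicMeasure x c))
    (hsum : Summable fun i => ‖c i‖ * ‖f (x i)‖) : Integrable f (atomicMeasure x c) := by
  refine ⟨hf, ?_⟩
  have h := tsum_enorm_ne_top_iff_summable_norm (f := fun i => ‖c i‖ * ‖f (x i)‖) |>.mpr
    (by simpa only [norm_mul, norm_norm] using hsum)
  simp only [enorm_mul, enorm_norm] at h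
  rw [hasFiniteIntegral_def, lintegral_atomicMeasure]
  exact h.lt_top

lemma integral_atomicMeasure {E : Type*} [NormedAddCommGroup E] [NormedSpace ℝ E]
    [CompleteSpace E] {f : ℝ → E} (hf : Integrable f (atomicMeasure x c)) :
    ∫ y, f y ∂atomicMeasure x c = ∑' i, ‖c i‖ • f (x i) := by
  rw [atomicMeasure, integral_sum_measure hf]
  simp [integral_dirac]

lemma measurable_atomicDensity [Countable ι] : Measurable (atomicDensity x c) := by
  refine measurable_of_measurable_on_compl_countable _ (Set.countable_range x) ?_
  rw [atomicDensity, Set.domRestrict_extend_compl_range]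
  exact measurable_const

lemma norm_atomicDensity_le (y : ℝ) : ‖atomicDensity x c y‖ ≤ 1 := by
  classical
  rw [atomicDensity, extend_def]
  split_ifs
  · rw [norm_div, Complex.norm_real, norm_norm]
    exact div_self_le_one _
  · simp

variable {x} in
lemma norm_smul_atomicDensity (hx : Injective x) (i : ι) :
    ‖c i‖ • atomicDensity x c (x i) = c i := by
  rw [atomicDensity, hx.extend_apply, Complex.real_smul]
  rcases eq_or_ne (c i) 0 with h | h
  · simp [h]
  · exact mul_div_cancel₀ _ (by simpa using h)

lemma isFiniteMeasure_atomicMeasure (hc : Summable fun i => ‖c i‖) :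
    IsFiniteMeasure (atomicMeasure x c) := by
  refine ⟨?_⟩
  rw [← lintegral_one, lintegral_atomicMeasure]
  simpa using (tsum_enorm_ne_top_iff_summable_norm.mpr hc).lt_top

lemma integrable_atomicMeasure_of_norm_le {E : Type*} [NormedAddCommGroup E] {f : ℝ → E}
    (hf : AEStronglyMeasurable f (atomicMeasure x c)) {n : ℕ}
    (hsum : Summable fun i => ‖c i‖ * |x i| ^ n) (hle : ∀ i, ‖f (x i)‖ ≤ |x i| ^ n) :
    Integrable f (atomicMeasure x c) :=
  integrable_atomicMeasure x c hf <| hsum.of_nonneg_of_le (fun i => by positivity)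
    fun i => mul_le_mul_of_nonneg_left (hle i) (norm_nonneg _)

variable [Countable ι]

lemma integrable_abs_pow_mul_norm_atomicDensity {n : ℕ}
    (hsum : Summable fun i => ‖c i‖ * |x i| ^ n) :
    Integrable (fun y => |y| ^ n * ‖atomicDensity x c y‖) (atomicMeasure x c) := by
  refine integrable_atomicMeasure_of_norm_le x c ?_ hsum fun i => ?_
  · exact ((continuous_abs.measurable.pow_const n).mul
      (measurable_atomicDensity x c).norm).aestronglyMeasurable
  · rw [norm_mul, norm_pow, Real.norm_eq_abs, abs_abs, norm_norm]
    exact mul_le_of_le_one_right (by positivity) (norm_atomicDensity_le x c _)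

variable {x} in
lemma integral_pow_mul_atomicDensity (hx : Injective x) {n : ℕ}
    (hsum : Summable fun i => ‖c i‖ * |x i| ^ n) :
    ∫ y : ℝ, (y : ℂ) ^ n * atomicDensity x c y ∂atomicMeasure x c =
      ∑' i, c i * x i ^ n := by
  have hint :
      Integrable (fun y : ℝ => (y : ℂ) ^ n * atomicDensity x c y) (atomicMeasure x c) := by
    refine integrable_atomicMeasure_of_norm_le x c ?_ hsum fun i => ?_
    · exact ((Complex.measurable_ofReal.pow_const n).mul
        (measurable_atomicDensity x c)).aestronglyMeasurable
    · rw [norm_mul, norm_pow, Complex.norm_real, Real.norm_eq_abs]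
      exact mul_le_of_le_one_right (by positivity) (norm_atomicDensity_le x c _)
  rw [integral_atomicMeasure x c hint]
  refine tsum_congr fun i => ?_
  rw [← mul_smul_comm, norm_smul_atomicDensity c hx, mul_comm]

end AtomicMeasure

lemma sum_inv_vandermonde_last_mul_pow {K : Type*} [Field K] {k : ℕ} {v : Fin (k + 1) → K}
    (hv : Injective v) (j : Fin (k + 1)) :
    ∑ i, (Matrix.vandermonde v)⁻¹ (Fin.last k) i * v i ^ (j : ℕ) =
      if j = Fin.last k then 1 else 0 := by
  have hdet : IsUnit (Matrix.vandermonde v).det :=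
    isUnit_iff_ne_zero.mpr (Matrix.det_vandermonde_ne_zero_iff.mpr hv)
  simpa [Matrix.mul_apply, Matrix.one_apply, eq_comm] using
    congrFun (congrFun (Matrix.nonsing_inv_mul _ hdet) (Fin.last k)) j

section Level

def levelWeight (k : ℕ) : Fin (k + 1) → ℝ :=
  (Matrix.vandermonde fun i : Fin (k + 1) => (i : ℝ) + 1)⁻¹ (Fin.last k)

def levelWeightNorm (k : ℕ) : ℝ := ∑ i, |levelWeight k i|

lemma sum_levelWeight_mul_pow {k n : ℕ} (hn : n ≤ k) :
    ∑ i, levelWeight k i * ((i : ℝ) + 1) ^ n = if n = k then 1 else 0 := by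
  have hv : Injective fun i : Fin (k + 1) => (i : ℝ) + 1 := fun i j h =>
    Fin.ext (by exact_mod_cast add_right_cancel h)
  simpa [levelWeight, Fin.ext_iff] using
    sum_inv_vandermonde_last_mul_pow hv ⟨n, Nat.lt_succ_of_le hn⟩

def levelPoint (k : ℕ) (t : ℝ) (i : Fin (k + 1)) : ℝ := t * ((i : ℝ) + 1)

def levelCoeff (k : ℕ) (d : ℂ) (t : ℝ) (i : Fin (k + 1)) : ℂ :=
  d * (levelWeight k i / t ^ k : ℝ)

def levelMoment (k : ℕ) (d : ℂ) (t : ℝ) (n : ℕ) : ℂ :=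
  ∑ i, levelCoeff k d t i * levelPoint k t i ^ n

lemma levelMoment_eq (k : ℕ) (d : ℂ) (t : ℝ) (n : ℕ) :
    levelMoment k d t n =
      d * (t ^ n / t ^ k : ℝ) * (∑ i, levelWeight k i * ((i : ℝ) + 1) ^ n : ℝ) := by
  simp only [levelMoment, levelCoeff, levelPoint]
  push_cast
  rw [Finset.mul_sum]
  exact Finset.sum_congr rfl fun i _ => by rw [mul_pow]; ring

lemma levelMoment_of_lt {k n : ℕ} (hn : n < k) (d : ℂ) (t : ℝ) : levelMoment k d t n = 0 := by
  simp [levelMoment_eq, sum_levelWeight_mul_pow hn.le, hn.ne]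

lemma levelMoment_self (k : ℕ) (d : ℂ) {t : ℝ} (ht : t ≠ 0) : levelMoment k d t k = d := by
  simp [levelMoment_eq, sum_levelWeight_mul_pow le_rfl, ht]

lemma sum_norm_levelCoeff_mul_le {k n : ℕ} (hn : 2 * n < k) (d : ℂ) {t : ℝ}
    (ht : (k : ℝ) + 1 ≤ t) :
    ∑ i, ‖levelCoeff k d t i‖ * |levelPoint k t i| ^ n ≤
      ‖d‖ * levelWeightNorm k / t := by
  have ht0 : 0 < t := by linarith [(k.cast_nonneg : (0 : ℝ) ≤ k)]
  rw [levelWeightNorm, Finset.mul_sum, Finset.sum_div]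
  refine Finset.sum_le_sum fun i _ => ?_
  have hpt : |levelPoint k t i| ^ n ≤ t ^ (k - 1) := by
    have hi : (i : ℝ) + 1 ≤ t := by
      have : (i : ℝ) ≤ k := by exact_mod_cast Nat.lt_succ_iff.mp i.isLt
      linarith
    calc |levelPoint k t i| ^ n ≤ (t * t) ^ n := by
          rw [levelPoint, abs_of_pos (by positivity)]
          gcongr
      _ = t ^ (2 * n) := by ring
      _ ≤ t ^ (k - 1) := pow_le_pow_right₀ (by linarith) (by omega)
  calc ‖levelCoeff k d t i‖ * |levelPoint k t i| ^ n
      = ‖d‖ * |levelWeight k i| / t ^ k * |levelPoint k t i| ^ n := by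
        rw [levelCoeff, norm_mul, Complex.norm_real, Real.norm_eq_abs, abs_div,
          abs_of_pos (pow_pos ht0 k)]
        ring
    _ ≤ ‖d‖ * |levelWeight k i| / t ^ k * t ^ (k - 1) := by gcongr
    _ = ‖d‖ * |levelWeight k i| / t := by
        rw [← pow_sub_one_mul (by omega : k ≠ 0)]
        field_simp

end Level

section Construction

variable (s : ℕ → ℂ)

def levelData : ℕ → ℂ × ℝ
  | k =>
    let d := s k - ∑ m : Fin k, levelMoment m (levelData m).1 (levelData m).2 k
    let prev := ∑ m : Fin k, (levelData m).2 * (m + 1)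
    (d, max (max (k + 1) (prev + 1)) (2 ^ k * ‖d‖ * levelWeightNorm k))

def amplitude (k : ℕ) : ℂ := (levelData s k).1

def scale (k : ℕ) : ℝ := (levelData s k).2

lemma amplitude_eq (k : ℕ) :
    amplitude s k =
      s k - ∑ m ∈ Finset.range k, levelMoment m (amplitude s m) (scale s m) k := by
  rw [amplitude, levelData, ← Fin.sum_univ_eq_sum_range]
  rfl

lemma scale_eq (k : ℕ) :
    scale s k = max (max ((k : ℝ) + 1) (∑ m ∈ Finset.range k, scale s m * (m + 1) + 1))
      (2 ^ k * ‖amplitude s k‖ * levelWeightNorm k) := by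
  rw [scale, amplitude, levelData, ← Fin.sum_univ_eq_sum_range (fun m => scale s m * (m + 1))]
  rfl

lemma add_one_le_scale (k : ℕ) : (k : ℝ) + 1 ≤ scale s k := by
  rw [scale_eq]
  exact (le_max_left _ _).trans (le_max_left _ _)

lemma scale_pos (k : ℕ) : 0 < scale s k := by
  linarith [add_one_le_scale s k, (k.cast_nonneg : (0 : ℝ) ≤ k)]

lemma scale_mul_lt_scale {m k : ℕ} (hmk : m < k) : scale s m * (m + 1) < scale s k := by
  have hle : scale s m * (m + 1) ≤ ∑ j ∈ Finset.range k, scale s j * (j + 1) :=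
    Finset.single_le_sum (f := fun j => scale s j * (j + 1))
      (fun j _ => by have := scale_pos s j; positivity) (Finset.mem_range.mpr hmk)
  have hlt : ∑ j ∈ Finset.range k, scale s j * (j + 1) + 1 ≤ scale s k := by
    rw [scale_eq s k]
    exact (le_max_right _ _).trans (le_max_left _ _)
  linarith

lemma two_pow_mul_norm_amplitude_le_scale (k : ℕ) :
    2 ^ k * ‖amplitude s k‖ * levelWeightNorm k ≤ scale s k := by
  rw [scale_eq]
  exact le_max_right _ _

lemma tsum_levelMoment (n : ℕ) :
    ∑' k, levelMoment k (amplitude s k) (scale s k) n = s n := by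
  rw [tsum_eq_sum (s := Finset.range (n + 1)) fun k hk =>
      levelMoment_of_lt (by simpa using hk) _ _,
    Finset.sum_range_succ, levelMoment_self _ _ (scale_pos s n).ne', amplitude_eq]
  ring

abbrev Atom : Type := Σ k : ℕ, Fin (k + 1)

def atomPoint (p : Atom) : ℝ := levelPoint p.1 (scale s p.1) p.2

def atomCoeff (p : Atom) : ℂ := levelCoeff p.1 (amplitude s p.1) (scale s p.1) p.2

lemma atomPoint_pos (p : Atom) : 0 < atomPoint s p :=
  mul_pos (scale_pos s p.1) (by positivity)

lemma atomPoint_lt {k k' : ℕ} (hk : k < k') (i : Fin (k + 1)) (i' : Fin (k' + 1)) :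
    atomPoint s ⟨k, i⟩ < atomPoint s ⟨k', i'⟩ := by
  have hi : (i : ℝ) + 1 ≤ k + 1 := by
    have : (i : ℝ) ≤ k := by exact_mod_cast Nat.lt_succ_iff.mp i.isLt
    linarith
  have hi' : (1 : ℝ) ≤ (i' : ℝ) + 1 := le_add_of_nonneg_left (Nat.cast_nonneg _)
  calc atomPoint s ⟨k, i⟩ ≤ scale s k * (k + 1) := by
        unfold atomPoint levelPoint
        gcongr
        exact (scale_pos s k).le
    _ < scale s k' := scale_mul_lt_scale s hk
    _ ≤ atomPoint s ⟨k', i'⟩ := le_mul_of_one_le_right (scale_pos s k').le hi'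

lemma atomPoint_injective : Injective (atomPoint s) := by
  rintro ⟨k, i⟩ ⟨k', i'⟩ h
  rcases lt_trichotomy k k' with hk | rfl | hk
  · exact absurd h (atomPoint_lt s hk i i').ne
  · have : (i : ℝ) + 1 = i' + 1 := mul_left_cancel₀ (scale_pos s k).ne' h
    simp_all [Fin.ext_iff]
  · exact absurd h (atomPoint_lt s hk i' i).ne'

lemma summable_norm_atomCoeff_mul_abs_pow (n : ℕ) :
    Summable fun p => ‖atomCoeff s p‖ * |atomPoint s p| ^ n := by
  refine (summable_sigma_of_nonneg fun p => by positivity).mpr ⟨fun k => .of_finite, ?_⟩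
  simp only [tsum_fintype]
  refine .of_norm_bounded_eventually_nat summable_geometric_two ?_
  filter_upwards [Filter.eventually_gt_atTop (2 * n)] with k hk
  rw [Real.norm_of_nonneg (Finset.sum_nonneg fun i _ => by positivity)]
  calc _ ≤ ‖amplitude s k‖ * levelWeightNorm k / scale s k :=
        sum_norm_levelCoeff_mul_le hk _ (add_one_le_scale s k)
    _ ≤ (1 / 2) ^ k := by
        rw [div_le_iff₀ (scale_pos s k), one_div_pow, one_div_mul_eq_div,
          le_div_iff₀ (by positivity)]
        linarith [two_pow_mul_norm_amplitude_le_scale s k]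

lemma tsum_atomCoeff_mul_pow (n : ℕ) :
    ∑' p, atomCoeff s p * atomPoint s p ^ n = s n := by
  have hsum : Summable fun p => atomCoeff s p * atomPoint s p ^ n :=
    .of_norm (by simpa [Complex.norm_real] using summable_norm_atomCoeff_mul_abs_pow s n)
  rw [hsum.tsum_sigma]
  simp only [tsum_fintype]
  exact tsum_levelMoment s n

end Construction

end Boas

end

open Boas in
/-- (Boas) Every complex sequence is the moment sequence of a finite complex
measure (given as a complex density `h` w.r.t. a finite positive measure `ρ`)
supported in `[0,∞)`, with all absolute moments finite. -/
theorem stmt7 (s : ℕ → ℂ) :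
    ∃ (ρ : Measure ℝ) (h : ℝ → ℂ), IsFiniteMeasure ρ ∧ Measurable h ∧
      ρ (Set.Iio 0) = 0 ∧
      (∀ n : ℕ, Integrable (fun x => |x| ^ n * ‖h x‖) ρ) ∧
      (∀ n : ℕ, s n = ∫ x, (x : ℂ) ^ n * h x ∂ρ) := by
  have hsum := summable_norm_atomCoeff_mul_abs_pow s
  refine ⟨atomicMeasure (atomPoint s) (atomCoeff s), atomicDensity (atomPoint s) (atomCoeff s),
    isFiniteMeasure_atomicMeasure _ _ (by simpa using hsum 0), measurable_atomicDensity _ _,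
    atomicMeasure_eq_zero_of_forall_notMem _ _ measurableSet_Iio
      fun p => not_lt.mpr (atomPoint_pos s p).le,
    fun n => integrable_abs_pow_mul_norm_atomicDensity _ _ (hsum n), fun n => ?_⟩
  rw [integral_pow_mul_atomicDensity _ (atomPoint_injective s) (hsum n), tsum_atomCoeff_mul_pow]
end

section
/- (Boas, atomic version) For every complex sequence (s_n)_{n∈ℕ} there exist complex coefficients (c_k)_{k∈ℕ} with Σ_k |c_k| · kⁿ < ∞ for all n, such that s_n = Σ_{k=0}^{∞} c_k · kⁿ for all n ∈ ℕ (with the convention 0⁰ = 1). -/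
/-!
Atoms are added one stage at a time. Stage `m` is a finitely supported measure whose moments of
order `< m` vanish and whose `m`-th moment corrects the error `s m - (m-th moment of the stages
before)`. Such a measure is a multiple of the `m`-th forward difference placed on the lattice
`h ℕ`: its `m`-th moment is `m! h^m` times the weight, while its absolute moments of order `n < m`
grow only like `h^n`, so for large `h` they are below `2^-m`. For each `n` the absolute `n`-th
moments of the stages are therefore summable, the superposition of all stages converges absolutely
against `kⁿ`, and its `n`-th moment is that of the first `n + 1` stages, namely `s n`.
-/

open Finset Filter Topology

noncomputable section

def moment (n : ℕ) : (ℕ →₀ ℂ) →ₗ[ℂ] ℂ :=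
  Finsupp.linearCombination ℂ fun k => (k : ℂ) ^ n

def absMoment (n : ℕ) (c : ℕ →₀ ℂ) : ℝ := c.sum fun k a => ‖a‖ * (k : ℝ) ^ n

lemma moment_apply (n : ℕ) (c : ℕ →₀ ℂ) :
    moment n c = c.sum fun k a => a * (k : ℂ) ^ n := by
  simp [moment, Finsupp.linearCombination_apply]

lemma moment_eq_tsum (n : ℕ) (c : ℕ →₀ ℂ) : moment n c = ∑' k, c k * (k : ℂ) ^ n := by
  rw [moment_apply, Finsupp.sum,
    tsum_eq_sum (s := c.support) fun k hk => by simp [Finsupp.notMem_support_iff.mp hk]]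

lemma absMoment_eq_tsum (n : ℕ) (c : ℕ →₀ ℂ) :
    absMoment n c = ∑' k, ‖c k‖ * (k : ℝ) ^ n := by
  rw [absMoment, Finsupp.sum,
    tsum_eq_sum (s := c.support) fun k hk => by simp [Finsupp.notMem_support_iff.mp hk]]

lemma absMoment_nonneg (n : ℕ) (c : ℕ →₀ ℂ) : 0 ≤ absMoment n c :=
  Finset.sum_nonneg fun _ _ => by positivity

lemma moment_mapDomain_mul (n h : ℕ) (c : ℕ →₀ ℂ) :
    moment n (c.mapDomain (h * ·)) = (h : ℂ) ^ n * moment n c := by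
  rw [moment_apply, Finsupp.sum_mapDomain_index (by simp) (by intros; ring), moment_apply,
    Finsupp.mul_sum]
  refine Finsupp.sum_congr fun k _ => ?_
  push_cast
  ring

lemma absMoment_mapDomain_mul (n : ℕ) {h : ℕ} (hh : 0 < h) (c : ℕ →₀ ℂ) :
    absMoment n (c.mapDomain (h * ·)) = (h : ℝ) ^ n * absMoment n c := by
  rw [absMoment, Finsupp.sum_mapDomain_index_inj (mul_right_injective₀ hh.ne'), absMoment,
    Finsupp.mul_sum]
  refine Finsupp.sum_congr fun k _ => ?_
  push_cast
  ring

lemma absMoment_smul (n : ℕ) (a : ℂ) (c : ℕ →₀ ℂ) :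
    absMoment n (a • c) = ‖a‖ * absMoment n c := by
  rw [absMoment, Finsupp.sum_smul_index' (by simp), absMoment, Finsupp.mul_sum]
  simp [mul_assoc]

def diffAtoms (m : ℕ) : ℕ →₀ ℂ :=
  ∑ i ∈ range (m + 1), Finsupp.single i ((-1) ^ (m - i) * (m.choose i : ℂ))

lemma moment_diffAtoms (j m : ℕ) :
    moment j (diffAtoms m) = (fwdDiff 1)^[m] (fun r : ℂ => r ^ j) 0 := by
  rw [fwdDiff_iter_eq_sum_shift, diffAtoms, map_sum]
  refine Finset.sum_congr rfl fun i _ => ?_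
  rw [moment, Finsupp.linearCombination_single]
  simp

lemma moment_diffAtoms_of_lt {j m : ℕ} (h : j < m) : moment j (diffAtoms m) = 0 := by
  rw [moment_diffAtoms, fwdDiff_iter_pow_eq_zero_of_lt h, Pi.zero_apply]

lemma moment_diffAtoms_self (m : ℕ) : moment m (diffAtoms m) = m.factorial := by
  rw [moment_diffAtoms, fwdDiff_iter_eq_factorial, Pi.natCast_apply]

def scaledDiffAtoms (m h : ℕ) (t : ℂ) : ℕ →₀ ℂ :=
  (t / ((h : ℂ) ^ m * m.factorial)) • (diffAtoms m).mapDomain (h * ·)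

lemma moment_scaledDiffAtoms (j m h : ℕ) (t : ℂ) :
    moment j (scaledDiffAtoms m h t) =
      t / ((h : ℂ) ^ m * m.factorial) * (h : ℂ) ^ j * moment j (diffAtoms m) := by
  rw [scaledDiffAtoms, map_smul, moment_mapDomain_mul, smul_eq_mul, mul_assoc]

lemma moment_scaledDiffAtoms_of_lt {j m : ℕ} (hj : j < m) (h : ℕ) (t : ℂ) :
    moment j (scaledDiffAtoms m h t) = 0 := by
  rw [moment_scaledDiffAtoms, moment_diffAtoms_of_lt hj, mul_zero]

lemma moment_scaledDiffAtoms_self (m : ℕ) {h : ℕ} (hh : h ≠ 0) (t : ℂ) :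
    moment m (scaledDiffAtoms m h t) = t := by
  rw [moment_scaledDiffAtoms, moment_diffAtoms_self]
  have : (m.factorial : ℂ) ≠ 0 := by exact_mod_cast m.factorial_ne_zero
  field_simp

lemma absMoment_scaledDiffAtoms (n m : ℕ) {h : ℕ} (hh : h ≠ 0) (t : ℂ) :
    absMoment n (scaledDiffAtoms m h t) =
      ‖t‖ / m.factorial * absMoment n (diffAtoms m) * ((h : ℝ) ^ n / (h : ℝ) ^ m) := by
  rw [scaledDiffAtoms, absMoment_smul, absMoment_mapDomain_mul n (Nat.pos_of_ne_zero hh)]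
  simp only [norm_div, norm_mul, norm_pow, Complex.norm_natCast]
  ring

lemma tendsto_absMoment_scaledDiffAtoms {n m : ℕ} (hn : n < m) (t : ℂ) :
    Tendsto (fun h => absMoment n (scaledDiffAtoms m h t)) atTop (𝓝 0) := by
  have hpow : Tendsto (fun h : ℕ => ((h : ℝ) ^ (m - n))⁻¹) atTop (𝓝 0) :=
    tendsto_inv_atTop_zero.comp
      ((tendsto_pow_atTop (Nat.sub_ne_zero_of_lt hn)).comp tendsto_natCast_atTop_atTop)
  have hlim := hpow.const_mul (‖t‖ / m.factorial * absMoment n (diffAtoms m))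
  rw [mul_zero] at hlim
  refine hlim.congr' ((eventually_ne_atTop 0).mono fun h hh => ?_)
  dsimp only
  rw [absMoment_scaledDiffAtoms n m hh, pow_sub₀ _ (by positivity) hn.le, mul_inv_rev, inv_inv,
    ← div_eq_mul_inv]

lemma exists_small_with_leading_moment (m : ℕ) (t : ℂ) {ε : ℝ} (hε : 0 < ε) :
    ∃ b : ℕ →₀ ℂ,
      (∀ j < m, moment j b = 0) ∧ moment m b = t ∧ ∀ n < m, absMoment n b ≤ ε := by
  have hsmall :
      ∀ᶠ h in atTop, ∀ n ∈ Set.Iio m, absMoment n (scaledDiffAtoms m h t) ≤ ε :=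
    (Set.finite_Iio m).eventually_all.2 fun n hn =>
      (tendsto_absMoment_scaledDiffAtoms hn t).eventually (ge_mem_nhds hε)
  obtain ⟨h, hh, hsmall⟩ := ((eventually_ne_atTop 0).and hsmall).exists
  exact ⟨scaledDiffAtoms m h t, fun j hj => moment_scaledDiffAtoms_of_lt hj h t,
    moment_scaledDiffAtoms_self m hh t, hsmall⟩

lemma summable_norm_tsum_of_summable_norm_uncurry {α β E : Type*} [NormedAddCommGroup E]
    [CompleteSpace E] {f : α → β → E} (hf : Summable fun p : α × β => ‖f p.1 p.2‖) :
    Summable fun b => ‖∑' a, f a b‖ :=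
  hf.prod_symm.prod.of_nonneg_of_le (fun _ => norm_nonneg _)
    fun b => norm_tsum_le_tsum_norm (hf.prod_symm.prod_factor b)

section Superposition

variable {d : ℕ → ℕ →₀ ℂ} {n : ℕ}

lemma summable_norm_mul_pow_uncurry (hd : Summable fun m => absMoment n (d m)) :
    Summable fun p : ℕ × ℕ => ‖d p.1 p.2 * (p.2 : ℂ) ^ n‖ := by
  simp only [norm_mul, norm_pow, Complex.norm_natCast]
  refine (summable_prod_of_nonneg fun _ => by positivity).2
    ⟨fun m => summable_of_ne_finset_zero (s := (d m).support) fun k hk => ?_, ?_⟩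
  · simp [Finsupp.notMem_support_iff.mp hk]
  · simpa only [← absMoment_eq_tsum] using hd

lemma summable_norm_tsum_mul_pow (hd : Summable fun m => absMoment n (d m)) :
    Summable fun k : ℕ => ‖∑' m, d m k‖ * (k : ℝ) ^ n := by
  refine (summable_norm_tsum_of_summable_norm_uncurry (f := fun m k => d m k * (k : ℂ) ^ n)
    (summable_norm_mul_pow_uncurry hd)).congr fun k => ?_
  rw [tsum_mul_right, norm_mul, norm_pow, Complex.norm_natCast]

lemma tsum_tsum_mul_pow (hd : Summable fun m => absMoment n (d m)) :
    ∑' k : ℕ, (∑' m, d m k) * (k : ℂ) ^ n = ∑' m, moment n (d m) := by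
  simp only [← tsum_mul_right, moment_eq_tsum]
  exact ((summable_norm_mul_pow_uncurry hd).of_norm).tsum_comm

end Superposition

section Construction

variable (b : ℕ → ℂ → ℕ →₀ ℂ) (s : ℕ → ℂ)

def approxSolution : ℕ → ℕ →₀ ℂ
  | 0 => 0
  | m + 1 => approxSolution m + b m (s m - moment m (approxSolution m))

def correction (m : ℕ) : ℕ →₀ ℂ := b m (s m - moment m (approxSolution b s m))

lemma approxSolution_eq_sum (N : ℕ) :
    approxSolution b s N = ∑ m ∈ range N, correction b s m := by
  induction N with
  | zero => rfl
  | succ N ih => rw [sum_range_succ, ← ih, approxSolution, correction]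

variable {b}

lemma moment_approxSolution (hb_lt : ∀ m t, ∀ j < m, moment j (b m t) = 0)
    (hb_eq : ∀ m t, moment m (b m t) = t) {n N : ℕ} (hn : n < N) :
    moment n (approxSolution b s N) = s n := by
  induction N with
  | zero => exact absurd hn n.not_lt_zero
  | succ N ih =>
    rw [approxSolution, map_add]
    rcases (Nat.lt_succ_iff.mp hn).lt_or_eq with hn | rfl
    · rw [ih hn, hb_lt _ _ _ hn, add_zero]
    · rw [hb_eq, add_sub_cancel]

lemma summable_absMoment_correction
    (hb_small : ∀ m t, ∀ n < m, absMoment n (b m t) ≤ (1 / 2) ^ m) (n : ℕ) :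
    Summable fun m => absMoment n (correction b s m) :=
  .of_norm_bounded_eventually_nat summable_geometric_two <|
    (eventually_gt_atTop n).mono fun m hm => by
      rw [Real.norm_of_nonneg (absMoment_nonneg _ _)]
      exact hb_small _ _ _ hm

end Construction

/-- (Boas, atomic version) Every complex sequence is represented by an atomic
complex measure on the nonnegative integers with all absolute moments finite. -/
theorem stmt8 (s : ℕ → ℂ) :
    ∃ c : ℕ → ℂ,
      (∀ n : ℕ, Summable (fun k : ℕ => ‖c k‖ * (k : ℝ) ^ n)) ∧
      (∀ n : ℕ, s n = ∑' k : ℕ, c k * (k : ℂ) ^ n) := by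
  choose b hb_lt hb_eq hb_small using
    fun m t => exists_small_with_leading_moment m t (ε := (1 / 2) ^ m) (by positivity)
  have hd := summable_absMoment_correction s hb_small
  refine ⟨fun k => ∑' m, correction b s m k, fun n => summable_norm_tsum_mul_pow (hd n),
    fun n => ?_⟩
  have hlater : ∀ m ∉ range (n + 1), moment n (correction b s m) = 0 := fun m hm =>
    hb_lt _ _ _ (by simpa using hm)
  rw [tsum_tsum_mul_pow (hd n), tsum_eq_sum hlater, ← map_sum, ← approxSolution_eq_sum,
    moment_approxSolution s hb_lt hb_eq n.lt_succ_self]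
end
end

section
/- Let g : ℝ → ℂ be smooth and compactly supported, and μ a finite complex measure on ℝ with all absolute moments finite. Then f(x) = ∫ g(x − y) dμ(y) is a Schwartz function. -/
open MeasureTheory Metric

/-- The convolution of a smooth compactly supported function with a finite
complex measure with all absolute moments finite is a Schwartz function. -/
theorem stmt11 (g : ℝ → ℂ) (hg : ContDiff ℝ (⊤ : ℕ∞) g) (hsupp : HasCompactSupport g)
    (ρ : Measure ℝ) [IsFiniteMeasure ρ] (h : ℝ → ℂ) (hh : Measurable h)
    (habs : ∀ n : ℕ, Integrable (fun y => |y| ^ n * ‖h y‖) ρ) :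
    ∃ F : SchwartzMap ℝ ℂ, ∀ x, F x = ∫ y, g (x - y) * h y ∂ρ := by
  have hInt : Integrable (fun y => ‖h y‖) ρ := by simpa using habs 0
  set G : ℕ → ℝ → ℂ := fun n => iteratedDeriv n g with hGdef
  have hGcont : ∀ n, Continuous (G n) := fun n => hg.continuous_iteratedDeriv n (by exact_mod_cast le_top)
  have hGc : ∀ n, HasCompactSupport (G n) := by
    intro n; induction n with
    | zero => simpa [hGdef] using hsupp
    | succ n ih => simpa [hGdef, iteratedDeriv_succ] using ih.deriv
  have hGdAt : ∀ n z, HasDerivAt (G n) (G (n + 1) z) z := by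
    intro n z
    have hd : Differentiable ℝ (G n) := hg.differentiable_iteratedDeriv n
      (by exact_mod_cast lt_top_iff_ne_top.2 (by simp))
    have key : G (n + 1) = deriv (G n) := iteratedDeriv_succ
    rw [congrFun key z]
    exact (hd z).hasDerivAt
  have hGsup : ∀ n, tsupport (G n) ⊆ tsupport g := by
    intro n; induction n with
    | zero => simp [hGdef]
    | succ n ih =>
        refine subset_trans ?_ ih
        have : tsupport (G (n + 1)) ⊆ tsupport (G n) := by
          rw [hGdef]
          simp only [iteratedDeriv_succ]
          exact closure_minimal support_deriv_subset isClosed_closure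
        exact this
  have bounds : ∀ n, ∃ M : ℝ, 0 ≤ M ∧ ∀ z, ‖G n z‖ ≤ M := by
    intro n
    obtain ⟨M, hM⟩ := (hGc n).exists_bound_of_continuous (hGcont n)
    exact ⟨max M 0, le_max_right _ _, fun z => (hM z).trans (le_max_left _ _)⟩
  obtain ⟨R, hR0, hRsub⟩ : ∃ R : ℝ, 0 ≤ R ∧ tsupport g ⊆ closedBall 0 R := by
    obtain ⟨r, hr⟩ := hsupp.isBounded.subset_closedBall 0
    exact ⟨max r 0, le_max_right _ _,
      hr.trans (closedBall_subset_closedBall (le_max_left _ _))⟩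
  have meas : ∀ n x, AEStronglyMeasurable (fun y => G n (x - y) * h y) ρ := fun n x =>
    (((hGcont n).measurable.comp (measurable_const.sub measurable_id)).mul hh).aestronglyMeasurable
  have int : ∀ n x, Integrable (fun y => G n (x - y) * h y) ρ := by
    intro n x
    obtain ⟨M, hM0, hMle⟩ := bounds n
    refine (hInt.const_mul M).mono' (meas n x) (ae_of_all _ fun y => ?_)
    rw [norm_mul]
    exact mul_le_mul_of_nonneg_right (hMle _) (norm_nonneg _)
  set fn : ℕ → ℝ → ℂ := fun n x => ∫ y, G n (x - y) * h y ∂ρ with hfn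
  have hasD : ∀ n x₀, HasDerivAt (fn n) (fn (n + 1) x₀) x₀ := by
    intro n x₀
    obtain ⟨M, hM0, hMle⟩ := bounds (n + 1)
    refine (hasDerivAt_integral_of_dominated_loc_of_deriv_le (s := ball x₀ 1) (ball_mem_nhds x₀ one_pos)
      (F := fun x y => G n (x - y) * h y) (F' := fun x y => G (n + 1) (x - y) * h y)
      (bound := fun y => M * ‖h y‖)
      (.of_forall fun x => meas n x) (int n x₀) (meas (n + 1) x₀)
      (ae_of_all _ fun y x _ => ?_) (hInt.const_mul M)
      (ae_of_all _ fun y x _ => ?_)).2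
    · rw [norm_mul]
      exact mul_le_mul_of_nonneg_right (hMle _) (norm_nonneg _)
    · exact ((hGdAt n (x - y)).comp_sub_const x y).mul_const (h y)
  have hIter : ∀ n, iteratedDeriv n (fn 0) = fn n := by
    intro n; induction n with
    | zero => simp
    | succ n ih =>
        rw [iteratedDeriv_succ, ih]
        exact funext fun x => (hasD n x).deriv
  have smooth : ContDiff ℝ ((⊤ : ℕ∞) : WithTop ℕ∞) (fn 0) := by
    refine contDiff_of_differentiable_iteratedDeriv fun m _ => ?_
    rw [hIter]
    exact fun x => (hasD m x).differentiableAt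
  have decay : ∀ k n : ℕ, ∃ C : ℝ, ∀ x, ‖x‖ ^ k * ‖iteratedFDeriv ℝ n (fn 0) x‖ ≤ C := by
    intro k n
    obtain ⟨M, hM0, hMle⟩ := bounds n
    have hBint : Integrable (fun y => M * ((R + |y|) ^ k * ‖h y‖)) ρ := by
      refine Integrable.const_mul ?_ M
      have heq : ∀ y : ℝ, (R + |y|) ^ k * ‖h y‖ =
          ∑ i ∈ Finset.range (k + 1), R ^ i * (k.choose i : ℝ) * (|y| ^ (k - i) * ‖h y‖) := by
        intro y
        rw [add_pow, Finset.sum_mul]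
        congr 1; ext i; ring
      simp_rw [heq]
      exact integrable_finset_sum _ fun i _ => (habs (k - i)).const_mul _
    refine ⟨∫ y, M * ((R + |y|) ^ k * ‖h y‖) ∂ρ, fun x => ?_⟩
    rw [norm_iteratedFDeriv_eq_norm_iteratedDeriv, hIter]
    have key : ‖x‖ ^ k * ‖fn n x‖ = ‖(‖x‖ ^ k : ℝ) • fn n x‖ := by
      rw [norm_smul, Real.norm_of_nonneg (by positivity : (0:ℝ) ≤ ‖x‖ ^ k)]
    rw [key]
    have : (‖x‖ ^ k : ℝ) • fn n x = ∫ y, (‖x‖ ^ k : ℝ) • (G n (x - y) * h y) ∂ρ := by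
      rw [integral_smul]
    rw [this]
    refine norm_integral_le_of_norm_le hBint (ae_of_all _ fun y => ?_)
    rw [norm_smul, Real.norm_of_nonneg (by positivity : (0:ℝ) ≤ ‖x‖ ^ k), norm_mul]
    by_cases hz : G n (x - y) = 0
    · rw [hz]; simp; positivity
    · have hmem : x - y ∈ tsupport g := hGsup n (subset_closure (by simpa using hz))
      have hxy : |x - y| ≤ R := by simpa [Real.norm_eq_abs] using mem_closedBall_zero_iff.1 (hRsub hmem)
      have hx : ‖x‖ ≤ R + |y| := by
        rw [Real.norm_eq_abs]
        calc |x| = |(x - y) + y| := by ring_nf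
        _ ≤ |x - y| + |y| := abs_add_le _ _
        _ ≤ R + |y| := by linarith
      calc ‖x‖ ^ k * (‖G n (x - y)‖ * ‖h y‖)
          ≤ (R + |y|) ^ k * (M * ‖h y‖) := by
            refine mul_le_mul (pow_le_pow_left₀ (norm_nonneg _) hx k) ?_ (by positivity) (by positivity)
            exact mul_le_mul_of_nonneg_right (hMle _) (norm_nonneg _)
        _ = M * ((R + |y|) ^ k * ‖h y‖) := by ring
  refine ⟨⟨fn 0, smooth, decay⟩, fun x => ?_⟩
  show fn 0 x = _
  simp only [hfn, hGdef, iteratedDeriv_zero]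
end

section
/- (Duran via step functions) For every complex sequence (s_n)_{n∈ℕ} and every a ≥ 0 there exists a function f : ℝ → ℂ of the form f(x) = Σ_{k=0}^{∞} c_k · χ_{[a+k, a+k+1)}(x) with Σ_k |c_k|(a+k+1)ⁿ < ∞ for all n, such that s_n = ∫ xⁿ f(x) dx for all n ∈ ℕ. In particular supp f ⊆ [a, ∞). -/
/-!
The moment `∫_{a+k}^{a+k+1} xⁿ dx` is a polynomial in `k` of degree `n` with leading
coefficient `1`. Hence the alternating block `∑_j (-1)^(m-j) C(m,j) δ_{(j+1)H}`, an `m`-th finite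
difference of step `H`, has vanishing moments of order `< m` and `m`-th moment `H^m m!`.
Building `c` as a sum of such blocks with scales `β_m`, the moment equations become triangular
and are solved recursively. Since `β_m` is of size `H_m^{-m}` while the weights `(a+k+1)ⁿ`, `n < m`,
on block `m` grow only like `H_m^n`, choosing each step `H_m` large enough makes the weighted
block norms decay like `2^{-m}`.
-/

open MeasureTheory Set Function Polynomial Finset Nat Filter fwdDiff

theorem pairwise_disjoint_Ico_add_natCast (a : ℝ) :
    Pairwise (Disjoint on fun k : ℕ => Ico (a + k) (a + k + 1)) :=
  fun i j hij => by
    simpa using pairwise_disjoint_Ico_add_intCast a (Nat.cast_injective.ne hij : (i : ℤ) ≠ j)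

theorem norm_pow_le_of_mem_Ico {a : ℝ} (ha : 0 ≤ a) {n k : ℕ} {x : ℝ}
    (hx : x ∈ Ico (a + k) (a + k + 1)) : ‖(x : ℂ) ^ n‖ ≤ (a + k + 1) ^ n := by
  have hx0 : 0 ≤ x := by linarith [hx.1, (Nat.cast_nonneg k : (0 : ℝ) ≤ k)]
  rw [norm_pow, Complex.norm_real, Real.norm_of_nonneg hx0]
  exact pow_le_pow_left₀ hx0 hx.2.le n

section StepFunction

variable {a : ℝ} {c : ℕ → ℂ} {f : ℝ → ℂ}

theorem tsum_mul_indicator_Ico_of_mem {x : ℝ} {k : ℕ} (hx : x ∈ Ico (a + k) (a + k + 1)) :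
    ∑' j : ℕ, c j * (Ico (a + j) (a + j + 1)).indicator (fun _ => (1 : ℂ)) x = c k := by
  rw [tsum_eq_single k fun j hj => ?_]
  · simp [indicator_of_mem hx]
  · have hxj : x ∉ Ico (a + j) (a + j + 1) := fun hxj =>
      (pairwise_disjoint_Ico_add_natCast a hj).ne_of_mem hxj hx rfl
    simp [indicator_of_notMem hxj]

theorem tsum_mul_indicator_Ico_of_notMem {x : ℝ}
    (hx : x ∉ ⋃ k : ℕ, Ico (a + k) (a + k + 1)) :
    ∑' j : ℕ, c j * (Ico (a + j) (a + j + 1)).indicator (fun _ => (1 : ℂ)) x = 0 := by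
  simp_all

theorem eqOn_Ico_of_eq_tsum_indicator
    (hf : ∀ x, f x = ∑' k : ℕ, c k * (Ico (a + k) (a + k + 1)).indicator (fun _ => 1) x)
    (k : ℕ) : EqOn f (fun _ => c k) (Ico (a + k) (a + k + 1)) :=
  fun x hx => (hf x).trans (tsum_mul_indicator_Ico_of_mem hx)

theorem eq_zero_of_eq_tsum_indicator
    (hf : ∀ x, f x = ∑' k : ℕ, c k * (Ico (a + k) (a + k + 1)).indicator (fun _ => 1) x)
    {x : ℝ} (hx : x ∉ ⋃ k : ℕ, Ico (a + k) (a + k + 1)) : f x = 0 :=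
  (hf x).trans (tsum_mul_indicator_Ico_of_notMem hx)

theorem support_subset_Ici_of_eq_tsum_indicator
    (hf : ∀ x, f x = ∑' k : ℕ, c k * (Ico (a + k) (a + k + 1)).indicator (fun _ => 1) x) :
    support f ⊆ Ici a := by
  intro x hx
  by_contra hxa
  refine hx (eq_zero_of_eq_tsum_indicator hf ?_)
  simp only [mem_iUnion, not_exists]
  exact fun k hk => hxa (le_trans (by simp) hk.1)

theorem integrableOn_iUnion_pow_mul_of_eq_tsum_indicator (ha : 0 ≤ a) {n : ℕ}
    (hf : ∀ x, f x = ∑' k : ℕ, c k * (Ico (a + k) (a + k + 1)).indicator (fun _ => 1) x)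
    (hc : Summable fun k : ℕ => ‖c k‖ * (a + k + 1) ^ n) :
    IntegrableOn (fun x : ℝ => (x : ℂ) ^ n * f x) (⋃ k : ℕ, Ico (a + k) (a + k + 1)) := by
  refine integrableOn_iUnion_of_summable_integral_norm (fun k => ?_) ?_
  · have hEq : EqOn (fun x : ℝ => c k * (x : ℂ) ^ n) (fun x => (x : ℂ) ^ n * f x)
        (Ico (a + k) (a + k + 1)) := fun x hx => by
      simp [eqOn_Ico_of_eq_tsum_indicator hf k hx, mul_comm]
    exact (((continuous_const.mul (Complex.continuous_ofReal.pow n)).integrableOn_Icc).mono_set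
      Ico_subset_Icc_self).congr_fun hEq measurableSet_Ico
  · refine hc.of_nonneg_of_le (fun k => integral_nonneg fun _ => norm_nonneg _) fun k => ?_
    have hbound : ∀ x ∈ Ico (a + k) (a + k + 1),
        ‖‖(x : ℂ) ^ n * f x‖‖ ≤ ‖c k‖ * (a + k + 1) ^ n := fun x hx => by
      rw [norm_norm, norm_mul, eqOn_Ico_of_eq_tsum_indicator hf k hx, mul_comm]
      exact mul_le_mul_of_nonneg_left (norm_pow_le_of_mem_Ico ha hx) (norm_nonneg _)
    simpa using (le_abs_self _).trans
      (norm_setIntegral_le_of_norm_le_const (measure_Ico_lt_top (μ := volume)) hbound)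

theorem integrable_pow_mul_of_eq_tsum_indicator (ha : 0 ≤ a) {n : ℕ}
    (hf : ∀ x, f x = ∑' k : ℕ, c k * (Ico (a + k) (a + k + 1)).indicator (fun _ => 1) x)
    (hc : Summable fun k : ℕ => ‖c k‖ * (a + k + 1) ^ n) :
    Integrable (fun x : ℝ => (x : ℂ) ^ n * f x) :=
  (integrableOn_iUnion_pow_mul_of_eq_tsum_indicator ha hf hc).integrable_of_forall_notMem_eq_zero
    fun _ hx => by rw [eq_zero_of_eq_tsum_indicator hf hx, mul_zero]

theorem hasSum_integral_pow_mul_of_eq_tsum_indicator (ha : 0 ≤ a) {n : ℕ}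
    (hf : ∀ x, f x = ∑' k : ℕ, c k * (Ico (a + k) (a + k + 1)).indicator (fun _ => 1) x)
    (hc : Summable fun k : ℕ => ‖c k‖ * (a + k + 1) ^ n) :
    HasSum (fun k : ℕ => c k * ∫ x in Ico (a + k) (a + k + 1), (x : ℂ) ^ n)
      (∫ x : ℝ, (x : ℂ) ^ n * f x) := by
  rw [← setIntegral_eq_integral_of_forall_compl_eq_zero fun _ hx => by
    rw [eq_zero_of_eq_tsum_indicator hf hx, mul_zero]]
  have hblock (k : ℕ) : c k * ∫ x in Ico (a + k) (a + k + 1), (x : ℂ) ^ n =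
      ∫ x in Ico (a + k) (a + k + 1), (x : ℂ) ^ n * f x := by
    rw [← integral_const_mul]
    refine setIntegral_congr_fun measurableSet_Ico fun x hx => ?_
    simp [eqOn_Ico_of_eq_tsum_indicator hf k hx, mul_comm]
  simpa only [hblock] using hasSum_integral_iUnion (fun _ => measurableSet_Ico)
    (pairwise_disjoint_Ico_add_natCast a)
    (integrableOn_iUnion_pow_mul_of_eq_tsum_indicator ha hf hc)

end StepFunction

theorem Polynomial.fwdDiff_iter_eval_eq_coeff_mul_factorial {R : Type*} [CommRing R] {P : R[X]}
    {m : ℕ} (hP : P.natDegree ≤ m) (x : R) : Δ_[1] ^[m] P.eval x = P.coeff m * m ! := by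
  rcases hP.eq_or_lt with rfl | hlt
  · simp [P.fwdDiff_iter_degree_eq_factorial]
  · simp [fwdDiff_iter_eq_zero_of_degree_lt hlt, coeff_eq_zero_of_natDegree_lt hlt]

theorem Polynomial.sum_range_alternating_choose_mul_eval {R : Type*} [CommRing R] {P : R[X]}
    {m : ℕ} (hP : P.natDegree ≤ m) (x h : R) :
    ∑ j ∈ range (m + 1), (-1) ^ (m - j) * m.choose j * P.eval ((x + j) * h) =
      h ^ m * m ! * P.coeff m := by
  have hQ : (P.comp (C h * X)).natDegree ≤ m := natDegree_le_iff_coeff_eq_zero.2 fun i hi => by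
    simp [coeff_eq_zero_of_natDegree_lt (hP.trans_lt hi)]
  have := fwdDiff_iter_eq_sum_shift 1 (P.comp (C h * X)).eval m x
  rw [fwdDiff_iter_eval_eq_coeff_mul_factorial hQ, comp_C_mul_X_coeff] at this
  rw [show h ^ m * m ! * P.coeff m = P.coeff m * h ^ m * (m ! : R) by ring, this]
  refine sum_congr rfl fun j _ => ?_
  simp [zsmul_eq_mul, mul_comm h]

noncomputable def momentPoly (a : ℝ) (n : ℕ) : ℂ[X] :=
  C ((n : ℂ) + 1)⁻¹ * ((X + C ((a : ℂ) + 1)) ^ (n + 1) - (X + C (a : ℂ)) ^ (n + 1))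

theorem integral_Ico_pow_eq_eval_momentPoly (a : ℝ) (n : ℕ) (t : ℝ) :
    ∫ x in Ico (a + t) (a + t + 1), (x : ℂ) ^ n = (momentPoly a n).eval (t : ℂ) := by
  rw [integral_Ico_eq_integral_Ioo, ← integral_Ioc_eq_integral_Ioo,
    ← intervalIntegral.integral_of_le (by linarith)]
  simp_rw [← Complex.ofReal_pow]
  rw [intervalIntegral.integral_ofReal, integral_pow]
  simp only [momentPoly, eval_mul, eval_C, eval_sub, eval_pow, eval_add, eval_X]
  push_cast
  field_simp
  ring

theorem coeff_momentPoly (a : ℝ) (n i : ℕ) :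
    (momentPoly a n).coeff i =
      ((n : ℂ) + 1)⁻¹ *
        ((((a : ℂ) + 1) ^ (n + 1 - i) - (a : ℂ) ^ (n + 1 - i)) * (n + 1).choose i) := by
  simp only [momentPoly, coeff_C_mul, coeff_sub, coeff_X_add_C_pow]
  ring

theorem natDegree_momentPoly_le (a : ℝ) (n : ℕ) : (momentPoly a n).natDegree ≤ n := by
  refine natDegree_le_iff_coeff_eq_zero.2 fun i hi => ?_
  rcases (Nat.succ_le_of_lt hi).eq_or_lt with rfl | hlt
  · simp [coeff_momentPoly]
  · simp [coeff_momentPoly, choose_eq_zero_of_lt hlt]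

theorem coeff_momentPoly_self (a : ℝ) (n : ℕ) : (momentPoly a n).coeff n = 1 := by
  rw [coeff_momentPoly, Nat.add_sub_cancel_left, choose_succ_self_right]
  field_simp
  push_cast
  ring

noncomputable def intervalMoment (a : ℝ) (n k : ℕ) : ℂ :=
  ∫ x in Ico (a + k) (a + k + 1), (x : ℂ) ^ n

theorem intervalMoment_eq_eval_momentPoly (a : ℝ) (n k : ℕ) :
    intervalMoment a n k = (momentPoly a n).eval (k : ℂ) := by
  simpa [intervalMoment] using integral_Ico_pow_eq_eval_momentPoly a n k

theorem norm_intervalMoment_le {a : ℝ} (ha : 0 ≤ a) (n k : ℕ) :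
    ‖intervalMoment a n k‖ ≤ (a + k + 1) ^ n := by
  simpa [intervalMoment] using
    norm_setIntegral_le_of_norm_le_const (measure_Ico_lt_top (μ := volume))
      fun x hx => norm_pow_le_of_mem_Ico ha (n := n) hx

noncomputable def altBlockSum (m H : ℕ) (g : ℕ → ℂ) : ℂ :=
  ∑ j ∈ range (m + 1), (-1) ^ (m - j) * m.choose j * g ((j + 1) * H)

theorem altBlockSum_intervalMoment (a : ℝ) {m n : ℕ} (hnm : n ≤ m) (H : ℕ) :
    altBlockSum m H (intervalMoment a n) = H ^ m * m ! * (momentPoly a n).coeff m := by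
  simpa [altBlockSum, intervalMoment_eq_eval_momentPoly, add_comm] using
    sum_range_alternating_choose_mul_eval ((natDegree_momentPoly_le a n).trans hnm) 1 (H : ℂ)

theorem altBlockSum_intervalMoment_of_lt (a : ℝ) {m n : ℕ} (hnm : n < m) (H : ℕ) :
    altBlockSum m H (intervalMoment a n) = 0 := by
  rw [altBlockSum_intervalMoment a hnm.le, coeff_eq_zero_of_natDegree_lt
    ((natDegree_momentPoly_le a n).trans_lt hnm), mul_zero]

section BlockSeq

def blockIndex (H : ℕ → ℕ) (p : Σ m : ℕ, Fin (m + 1)) : ℕ := (p.2 + 1) * H p.1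

def blockCoeff (β : ℕ → ℂ) (p : Σ m : ℕ, Fin (m + 1)) : ℂ :=
  β p.1 * ((-1) ^ (p.1 - p.2) * p.1.choose p.2)

noncomputable def blockSeq (β : ℕ → ℂ) (H : ℕ → ℕ) : ℕ → ℂ :=
  extend (blockIndex H) (blockCoeff β) 0

variable {β : ℕ → ℂ} {H : ℕ → ℕ}

theorem blockIndex_injective (hH : ∀ m, 0 < H m) (hlt : ∀ i m, i < m → (i + 1) * H i < H m) :
    Injective (blockIndex H) := by
  have key : ∀ p q : Σ m : ℕ, Fin (m + 1), p.1 < q.1 → blockIndex H p < blockIndex H q := by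
    rintro ⟨m, j⟩ ⟨m', j'⟩ (h : m < m')
    exact calc (j + 1) * H m ≤ (m + 1) * H m := Nat.mul_le_mul_right _ (by omega)
        _ < H m' := hlt m m' h
        _ ≤ (j' + 1) * H m' := Nat.le_mul_of_pos_left _ (by omega)
  rintro ⟨m, j⟩ ⟨m', j'⟩ hpq
  rcases lt_trichotomy m m' with h | rfl | h
  · exact absurd hpq (key _ _ h).ne
  · have : (j : ℕ) = j' := Nat.eq_of_mul_eq_mul_right (hH m) (by simpa [blockIndex] using hpq)
    rw [Fin.ext this]
  · exact absurd hpq (key _ _ h).ne'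

theorem blockSeq_blockIndex (hH : ∀ m, 0 < H m) (hlt : ∀ i m, i < m → (i + 1) * H i < H m)
    (p : Σ m : ℕ, Fin (m + 1)) : blockSeq β H (blockIndex H p) = blockCoeff β p :=
  (blockIndex_injective hH hlt).extend_apply _ _ p

theorem blockSeq_of_notMem_range {k : ℕ} (hk : k ∉ range (blockIndex H)) : blockSeq β H k = 0 :=
  extend_apply' _ _ _ hk

theorem norm_blockCoeff (p : Σ m : ℕ, Fin (m + 1)) :
    ‖blockCoeff β p‖ = ‖β p.1‖ * p.1.choose p.2 := by
  simp [blockCoeff]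

theorem sum_blockCoeff_mul (g : ℕ → ℂ) (m : ℕ) :
    ∑ j : Fin (m + 1), blockCoeff β ⟨m, j⟩ * g (blockIndex H ⟨m, j⟩) =
      β m * altBlockSum m (H m) g := by
  rw [altBlockSum, mul_sum, ← Fin.sum_univ_eq_sum_range]
  simp only [blockCoeff, blockIndex, mul_assoc]

variable {v : ℕ → ℝ}

theorem summable_norm_blockCoeff_mul (hv : ∀ k, 0 ≤ v k)
    (hsum : Summable fun m => ‖β m‖ * ∑ j ∈ range (m + 1), m.choose j * v ((j + 1) * H m)) :
    Summable fun p => ‖blockCoeff β p‖ * v (blockIndex H p) := by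
  refine (summable_sigma_of_nonneg fun p => mul_nonneg (norm_nonneg _) (hv _)).2
    ⟨fun m => .of_finite, ?_⟩
  refine hsum.congr fun m => ?_
  rw [tsum_fintype, mul_sum, ← Fin.sum_univ_eq_sum_range]
  simp only [norm_blockCoeff, blockIndex, mul_assoc]

theorem summable_norm_blockSeq_mul (hH : ∀ m, 0 < H m) (hlt : ∀ i m, i < m → (i + 1) * H i < H m)
    (hv : ∀ k, 0 ≤ v k)
    (hsum : Summable fun m => ‖β m‖ * ∑ j ∈ range (m + 1), m.choose j * v ((j + 1) * H m)) :
    Summable fun k => ‖blockSeq β H k‖ * v k := by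
  rw [← (blockIndex_injective hH hlt).summable_iff fun k hk => by
    rw [blockSeq_of_notMem_range hk, norm_zero, zero_mul]]
  simpa [comp_def, blockSeq_blockIndex hH hlt] using summable_norm_blockCoeff_mul hv hsum

theorem hasSum_blockSeq_mul (hH : ∀ m, 0 < H m) (hlt : ∀ i m, i < m → (i + 1) * H i < H m)
    (hv : ∀ k, 0 ≤ v k)
    (hsum : Summable fun m => ‖β m‖ * ∑ j ∈ range (m + 1), m.choose j * v ((j + 1) * H m))
    {g : ℕ → ℂ} (hg : ∀ k, ‖g k‖ ≤ v k) :
    HasSum (fun k => blockSeq β H k * g k) (∑' m, β m * altBlockSum m (H m) g) := by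
  have hF : Summable fun p => blockCoeff β p * g (blockIndex H p) :=
    (summable_norm_blockCoeff_mul hv hsum).of_norm_bounded fun p => by
      rw [norm_mul]; exact mul_le_mul_of_nonneg_left (hg _) (norm_nonneg _)
  have hsigma := hF.hasSum.sigma fun m => by
    simpa [sum_blockCoeff_mul] using hasSum_fintype fun j : Fin (m + 1) =>
      blockCoeff β ⟨m, j⟩ * g (blockIndex H ⟨m, j⟩)
  rw [hsigma.tsum_eq, ← (blockIndex_injective hH hlt).hasSum_iff fun k hk => by
    rw [blockSeq_of_notMem_range hk, zero_mul]]
  simpa [comp_def, blockSeq_blockIndex hH hlt] using hF.hasSum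

end BlockSeq

theorem div_pow_mul_two_pow_mul_pow_le {R H B : ℝ} {m n : ℕ} (hnm : n < m) (hR : 0 ≤ R)
    (hB : 1 ≤ B) (hH : 1 ≤ H) (hRH : R * 4 ^ m * B ^ m ≤ H) :
    R / H ^ m * 2 ^ m * (B * H) ^ n ≤ (1 / 2) ^ m := by
  obtain ⟨l, rfl⟩ : ∃ l, m = l + 1 := ⟨m - 1, by omega⟩
  have hBH : (B * H) ^ n ≤ B ^ (l + 1) * H ^ l :=
    calc (B * H) ^ n ≤ (B * H) ^ l :=
          pow_le_pow_right₀ (one_le_mul_of_one_le_of_one_le hB hH) (by omega)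
      _ = B ^ l * H ^ l := mul_pow _ _ _
      _ ≤ B ^ (l + 1) * H ^ l := by gcongr; omega
  have h4 : (4 : ℝ) ^ (l + 1) = 2 ^ (l + 1) * 2 ^ (l + 1) := by rw [← mul_pow]; norm_num
  calc R / H ^ (l + 1) * 2 ^ (l + 1) * (B * H) ^ n
      ≤ R / H ^ (l + 1) * 2 ^ (l + 1) * (B ^ (l + 1) * H ^ l) := by gcongr
    _ = R * 2 ^ (l + 1) * B ^ (l + 1) / H := by field_simp; ring
    _ ≤ (1 / 2) ^ (l + 1) := by
      rw [div_le_iff₀ (by linarith), div_pow, one_pow, ← mul_div_right_comm,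
        le_div_iff₀ (by positivity)]
      rw [h4] at hRH
      linarith

section Construction

variable (s : ℕ → ℂ) (a : ℝ)

/-- The pair `(r_m, H_m)`: `r_m` is what the blocks of index `< m` leave of `s m`; block `m` gets
the scale `r_m / (H_m ^ m * m!)`, so it contributes exactly `r_m` to the `m`-th moment. The ceiling
makes block `m` small in every weighted norm of order `< m`; the sum places it to the right of all
earlier blocks. -/
noncomputable def blockData : ℕ → ℂ × ℕ
  | m =>
    let r := s m - ∑ i : Fin m, (blockData i).1 / ((blockData i).2 ^ (i : ℕ) * (i : ℕ)!) *
      altBlockSum i (blockData i).2 (intervalMoment a m)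
    (r, ⌈‖r‖ * 4 ^ m * ((a + 2) * (m + 1)) ^ m⌉₊ + ∑ i : Fin m, (i + 1) * (blockData i).2 + 1)
termination_by m => m
decreasing_by all_goals exact i.2

noncomputable def momentResidual (m : ℕ) : ℂ := (blockData s a m).1

noncomputable def blockStep (m : ℕ) : ℕ := (blockData s a m).2

noncomputable def blockScale (m : ℕ) : ℂ := momentResidual s a m / (blockStep s a m ^ m * m !)

theorem momentResidual_eq (m : ℕ) : momentResidual s a m =
    s m - ∑ i ∈ range m,
      blockScale s a i * altBlockSum i (blockStep s a i) (intervalMoment a m) := by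
  rw [momentResidual, blockData, ← Fin.sum_univ_eq_sum_range]
  rfl

theorem blockStep_eq (m : ℕ) : blockStep s a m =
    ⌈‖momentResidual s a m‖ * 4 ^ m * ((a + 2) * (m + 1)) ^ m⌉₊ +
      ∑ i ∈ range m, (i + 1) * blockStep s a i + 1 := by
  rw [momentResidual_eq, blockStep, blockData]
  simp only [← Fin.sum_univ_eq_sum_range]
  rfl

theorem blockStep_pos (m : ℕ) : 0 < blockStep s a m := by
  rw [blockStep_eq]
  omega

theorem mul_blockStep_lt {i m : ℕ} (h : i < m) : (i + 1) * blockStep s a i < blockStep s a m := by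
  have := single_le_sum (f := fun i => (i + 1) * blockStep s a i) (fun _ _ => Nat.zero_le _)
    (mem_range.2 h)
  rw [blockStep_eq s a m]
  omega

theorem norm_momentResidual_mul_le_blockStep (m : ℕ) :
    ‖momentResidual s a m‖ * 4 ^ m * ((a + 2) * (m + 1)) ^ m ≤ blockStep s a m := by
  rw [blockStep_eq s a m]
  push_cast
  have := Nat.le_ceil (‖momentResidual s a m‖ * 4 ^ m * ((a + 2) * (m + 1)) ^ m)
  have : (0 : ℝ) ≤ ∑ i ∈ range m, ((i : ℝ) + 1) * blockStep s a i := by positivity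
  linarith

theorem sum_blockScale_mul_altBlockSum (n : ℕ) :
    ∑ m ∈ range (n + 1), blockScale s a m * altBlockSum m (blockStep s a m) (intervalMoment a n) =
      s n := by
  have hH : (blockStep s a n : ℂ) ≠ 0 := Nat.cast_ne_zero.2 (blockStep_pos s a n).ne'
  have hfac : (n ! : ℂ) ≠ 0 := Nat.cast_ne_zero.2 (factorial_ne_zero n)
  rw [sum_range_succ, altBlockSum_intervalMoment a le_rfl, coeff_momentPoly_self, blockScale,
    momentResidual_eq]
  field_simp
  ring

theorem norm_blockScale_mul_sum_le (ha : 0 ≤ a) {m n : ℕ} (hnm : n < m) :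
    ‖blockScale s a m‖ * ∑ j ∈ range (m + 1),
      (m.choose j : ℝ) * (a + ((j + 1) * blockStep s a m : ℕ) + 1) ^ n ≤ (1 / 2) ^ m := by
  set H := blockStep s a m
  have hH : (1 : ℝ) ≤ H := by exact_mod_cast blockStep_pos s a m
  have hm : (0 : ℝ) ≤ m := m.cast_nonneg
  have hB : (1 : ℝ) ≤ (a + 2) * (m + 1) := by nlinarith
  have hscale : ‖blockScale s a m‖ ≤ ‖momentResidual s a m‖ / (H : ℝ) ^ m := by
    rw [blockScale, norm_div, norm_mul, norm_pow, Complex.norm_natCast, Complex.norm_natCast]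
    exact div_le_div_of_nonneg_left (norm_nonneg _) (by positivity)
      (le_mul_of_one_le_right (by positivity) (by exact_mod_cast m.factorial_pos))
  have hweight (j : ℕ) (hj : j ∈ range (m + 1)) :
      a + ((j + 1) * H : ℕ) + 1 ≤ (a + 2) * (m + 1) * H := by
    have hjm : (j : ℝ) + 1 ≤ m + 1 := by exact_mod_cast (by simp at hj; omega : j + 1 ≤ m + 1)
    have hmH : 1 ≤ ((m : ℝ) + 1) * H := by nlinarith
    push_cast
    nlinarith [mul_le_mul_of_nonneg_right hjm (by linarith : (0 : ℝ) ≤ H),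
      mul_nonneg ha (sub_nonneg.2 hmH)]
  calc _ ≤ ‖momentResidual s a m‖ / H ^ m *
        ∑ j ∈ range (m + 1), (m.choose j : ℝ) * ((a + 2) * (m + 1) * H) ^ n := by
        gcongr with j hj
        exact hweight j hj
    _ = ‖momentResidual s a m‖ / H ^ m * 2 ^ m * ((a + 2) * (m + 1) * H) ^ n := by
        rw [← sum_mul, ← Nat.cast_sum, sum_range_choose]
        push_cast
        ring
    _ ≤ (1 / 2) ^ m := div_pow_mul_two_pow_mul_pow_le hnm (norm_nonneg _) hB hH
        (norm_momentResidual_mul_le_blockStep s a m)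

theorem summable_norm_blockScale_mul_sum (ha : 0 ≤ a) (n : ℕ) :
    Summable fun m => ‖blockScale s a m‖ * ∑ j ∈ range (m + 1),
      (m.choose j : ℝ) * (a + ((j + 1) * blockStep s a m : ℕ) + 1) ^ n :=
  summable_geometric_two.of_norm_bounded_eventually_nat <|
    (eventually_gt_atTop n).mono fun m hm => by
      rw [Real.norm_of_nonneg (by positivity)]
      exact norm_blockScale_mul_sum_le s a ha hm

theorem hasSum_blockSeq_mul_intervalMoment (ha : 0 ≤ a) (n : ℕ) :
    HasSum (fun k => blockSeq (blockScale s a) (blockStep s a) k * intervalMoment a n k) (s n) := by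
  have h := hasSum_blockSeq_mul (v := fun k => (a + k + 1) ^ n) (blockStep_pos s a)
    (fun i m => mul_blockStep_lt s a) (fun k => by positivity)
    (summable_norm_blockScale_mul_sum s a ha n) (norm_intervalMoment_le ha n)
  rwa [tsum_eq_sum (s := range (n + 1)) fun m hm => ?_, sum_blockScale_mul_altBlockSum] at h
  rw [altBlockSum_intervalMoment_of_lt a (by simpa using hm), mul_zero]

end Construction

/-- (Duran via step functions) Every complex sequence is the moment sequence of
a step function `f = Σ_k c_k · χ_{[a+k, a+k+1)}` supported in `[a, ∞)`. -/
theorem stmt13 (s : ℕ → ℂ) (a : ℝ) (ha : 0 ≤ a) :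
    ∃ c : ℕ → ℂ,
      (∀ n : ℕ, Summable (fun k : ℕ => ‖c k‖ * (a + k + 1) ^ n)) ∧
      ∀ f : ℝ → ℂ,
        (∀ x, f x = ∑' k : ℕ,
          c k * Set.indicator (Set.Ico (a + k) (a + k + 1)) (fun _ => (1 : ℂ)) x) →
        Function.support f ⊆ Set.Ici a ∧
        (∀ n : ℕ, Integrable (fun x : ℝ => (x : ℂ) ^ n * f x)) ∧
        (∀ n : ℕ, s n = ∫ x : ℝ, (x : ℂ) ^ n * f x) := by
  have hc (n : ℕ) : Summable fun k : ℕ =>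
      ‖blockSeq (blockScale s a) (blockStep s a) k‖ * (a + k + 1) ^ n :=
    summable_norm_blockSeq_mul (blockStep_pos s a) (fun i m => mul_blockStep_lt s a)
      (fun k => by positivity) (summable_norm_blockScale_mul_sum s a ha n)
  refine ⟨_, hc, fun f hf => ⟨support_subset_Ici_of_eq_tsum_indicator hf,
    fun n => integrable_pow_mul_of_eq_tsum_indicator ha hf (hc n), fun n => ?_⟩⟩
  exact (hasSum_blockSeq_mul_intervalMoment s a ha n).unique
    (hasSum_integral_pow_mul_of_eq_tsum_indicator ha hf (hc n))
end
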